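/- arXiv:2405.03269 — 2 statements merged into one kernel-verified Lean document; each statement's English description precedes it below -/
import Mathlib

section
/- Let (X,d) be a geodesic metric space and ℓ a geodesic such that every geodesic triangle with one side contained in ℓ is δ-slim, and moreover for every x ∈ X, y ∈ ℓ, z ∈ π_ℓ(x) one has d(z,[x,y]) < 4δ, and the 'maximum principle' holds: for any geodesic segment [a,b] and point c, the function u ↦ d(c,u) on [a,b] attains its maximum at a or b. Then ℓ is 24δ-contracting: for any ball B(x,r) disjoint from ℓ and any two points x' ∈ π_ℓ(x), y' ∈ π_ℓ(y) with y ∈ B(x,r), one has d(x', y') < 12δ, hence diam(π_ℓ(B(x,r))) ≤ 24δ. -/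
/-!
Write `D = d(x, ℓ)`. If `d(x, y) ≤ D` (as for every `y` in a ball missing `ℓ`), a segment from `y`
to an almost-nearest point of `ℓ` passes within `4δ` of any projection `y'` of `y`, and by the
maximum principle it stays within `D + ε` of `x`; so `d(x, y') ≤ D + 4δ`. Two points `p, q ∈ ℓ`
with `d(x, p), d(x, q) ≤ D + 4δ` are `12δ`-close: by slimness the midpoint of `[p, q] ⊆ ℓ` is
`δ`-close to a point `w` of `[x, p] ∪ [x, q]`, and `d(x, w) > D - δ` puts `w` within `5δ` of `p`
or `q`.
-/

open Set Metric

/-- `s` is (the image of) a geodesic segment from `a` to `b`. -/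
def IsGeodSeg {X : Type*} [MetricSpace X] (s : Set X) (a b : X) : Prop :=
  ∃ f : ℝ → X, f 0 = a ∧ f (dist a b) = b ∧
    (∀ u ∈ Set.Icc (0 : ℝ) (dist a b), ∀ v ∈ Set.Icc (0 : ℝ) (dist a b),
      dist (f u) (f v) = |u - v|) ∧
    f '' Set.Icc (0 : ℝ) (dist a b) = s

/-- `ℓ` is (the image of) a geodesic: an isometric image of an interval of `ℝ`. -/
def IsGeodesicSet {X : Type*} [MetricSpace X] (ℓ : Set X) : Prop :=
  ∃ (I : Set ℝ) (f : ℝ → X), I.OrdConnected ∧ f '' I = ℓ ∧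
    ∀ s ∈ I, ∀ t ∈ I, dist (f s) (f t) = |s - t|

/-- The set-valued nearest-point projection onto `ℓ`. -/
def projSet {X : Type*} [MetricSpace X] (ℓ : Set X) (x : X) : Set X :=
  {y ∈ ℓ | dist x y = Metric.infDist x ℓ}

/-- Every geodesic triangle with one side on `ℓ` is `δ`-slim. -/
def SlimOn {X : Type*} [MetricSpace X] (δ : ℝ) (ℓ : Set X) : Prop :=
  ∀ (x y z : X) (sxy syz szx : Set X),
    IsGeodSeg sxy x y → IsGeodSeg syz y z → IsGeodSeg szx z x → sxy ⊆ ℓ →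
    sxy ⊆ Metric.thickening δ (syz ∪ szx) ∧
    syz ⊆ Metric.thickening δ (szx ∪ sxy) ∧
    szx ⊆ Metric.thickening δ (sxy ∪ syz)

def IsGeodesicSpace (X : Type*) [MetricSpace X] : Prop :=
  ∀ a b : X, ∃ s : Set X, IsGeodSeg s a b

def MaxPrinciple (X : Type*) [MetricSpace X] : Prop :=
  ∀ (a b c : X) (s : Set X), IsGeodSeg s a b → ∀ u ∈ s, dist c u ≤ max (dist c a) (dist c b)

def ProjCloseToSegments {X : Type*} [MetricSpace X] (ℓ : Set X) (C : ℝ) : Prop :=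
  ∀ x : X, ∀ y ∈ ℓ, ∀ z ∈ projSet ℓ x, ∀ s : Set X, IsGeodSeg s x y → infDist z s < C

section GeodesicSegments

variable {X : Type*} [MetricSpace X] {s : Set X} {a b : X}

theorem IsGeodSeg.exists_param (h : IsGeodSeg s a b) :
    ∃ f : ℝ → X, f '' Icc 0 (dist a b) = s ∧
      ∀ u ∈ Icc 0 (dist a b), dist a (f u) = u ∧ dist (f u) b = dist a b - u := by
  obtain ⟨f, hf0, hfd, hiso, himg⟩ := h
  have h0 : (0 : ℝ) ∈ Icc 0 (dist a b) := ⟨le_rfl, dist_nonneg⟩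
  have hd : dist a b ∈ Icc 0 (dist a b) := ⟨dist_nonneg, le_rfl⟩
  refine ⟨f, himg, fun u hu => ⟨?_, ?_⟩⟩
  · rw [← hf0, hiso 0 h0 u hu, abs_sub_comm, abs_of_nonneg (by linarith [hu.1]), sub_zero]
  · rw [← hfd, hiso u hu _ hd, abs_sub_comm, abs_of_nonneg (by linarith [hu.2]), hfd]

theorem IsGeodSeg.dist_add_dist_eq (h : IsGeodSeg s a b) {p : X} (hp : p ∈ s) :
    dist a p + dist p b = dist a b := by
  obtain ⟨f, rfl, hf⟩ := h.exists_param
  obtain ⟨u, hu, rfl⟩ := hp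
  rw [(hf u hu).1, (hf u hu).2]
  ring

theorem IsGeodSeg.exists_dist_eq (h : IsGeodSeg s a b) {t : ℝ} (ht : t ∈ Icc 0 (dist a b)) :
    ∃ p ∈ s, dist a p = t ∧ dist p b = dist a b - t := by
  obtain ⟨f, rfl, hf⟩ := h.exists_param
  exact ⟨f t, mem_image_of_mem f ht, hf t ht⟩

theorem IsGeodSeg.left_mem (h : IsGeodSeg s a b) : a ∈ s := by
  obtain ⟨p, hp, hap, -⟩ := h.exists_dist_eq ⟨le_rfl, dist_nonneg⟩
  rwa [dist_eq_zero.mp hap]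

theorem IsGeodSeg.exists_midpoint (h : IsGeodSeg s a b) :
    ∃ m ∈ s, dist a m = dist a b / 2 ∧ dist m b = dist a b / 2 := by
  have hd : 0 ≤ dist a b := dist_nonneg
  obtain ⟨m, hm, ham, hmb⟩ := h.exists_dist_eq (t := dist a b / 2) ⟨by linarith, by linarith⟩
  exact ⟨m, hm, ham, by linarith⟩

theorem IsGeodSeg.symm (h : IsGeodSeg s a b) : IsGeodSeg s b a := by
  obtain ⟨f, hf0, hfd, hiso, himg⟩ := h
  refine ⟨fun t => f (dist a b - t), by simpa using hfd, by simp [dist_comm b a, hf0], ?_, ?_⟩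
  · intro u hu v hv
    rw [dist_comm b a] at hu hv
    rw [hiso _ ⟨by linarith [hu.2], by linarith [hu.1]⟩ _
        ⟨by linarith [hv.2], by linarith [hv.1]⟩,
      show dist a b - u - (dist a b - v) = -(u - v) by ring, abs_neg]
  · rw [dist_comm b a, ← himg, ← image_image f (dist a b - ·), image_const_sub_Icc, sub_zero,
      sub_self]

end GeodesicSegments

theorem IsGeodesicSet.exists_isGeodSeg_subset {X : Type*} [MetricSpace X] {ℓ : Set X}
    (hℓ : IsGeodesicSet ℓ) {p q : X} (hp : p ∈ ℓ) (hq : q ∈ ℓ) :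
    ∃ S : Set X, IsGeodSeg S p q ∧ S ⊆ ℓ := by
  obtain ⟨I, f, hI, rfl, hiso⟩ := hℓ
  have ordered : ∀ u ∈ I, ∀ v ∈ I, u ≤ v → ∃ S, IsGeodSeg S (f u) (f v) ∧ S ⊆ f '' I := by
    intro u hu v hv huv
    have hIcc : Icc u v ⊆ I := hI.out hu hv
    have hd : dist (f u) (f v) = v - u := by
      rw [hiso u hu v hv, abs_sub_comm, abs_of_nonneg (by linarith)]
    have hmem : ∀ t ∈ Icc 0 (dist (f u) (f v)), u + t ∈ I := fun t ht =>
      hIcc ⟨by linarith [ht.1], by linarith [ht.2]⟩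
    refine ⟨(fun t => f (u + t)) '' Icc 0 (dist (f u) (f v)),
      ⟨fun t => f (u + t), by simp, by simp only [hd, add_sub_cancel], ?_, rfl⟩, ?_⟩
    · intro a ha b hb
      rw [hiso _ (hmem a ha) _ (hmem b hb), add_sub_add_left_eq_sub]
    · rintro _ ⟨t, ht, rfl⟩
      exact mem_image_of_mem f (hmem t ht)
  obtain ⟨u, hu, rfl⟩ := hp
  obtain ⟨v, hv, rfl⟩ := hq
  rcases le_total u v with huv | hvu
  · exact ordered u hu v hv huv
  · obtain ⟨S, hS, hSℓ⟩ := ordered v hv u hu hvu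
    exact ⟨S, hS.symm, hSℓ⟩

theorem le_infDist_of_ball_inter_eq_empty {X : Type*} [MetricSpace X] {ℓ : Set X} {x y : X}
    {r : ℝ} (hdisj : ball x r ∩ ℓ = ∅) (hℓ : ℓ.Nonempty) (hy : y ∈ ball x r) :
    dist x y ≤ infDist x ℓ := by
  refine (le_infDist hℓ).mpr fun z hz => ?_
  by_contra! hzy
  have hz' : z ∈ ball x r ∩ ℓ := ⟨mem_ball'.mpr (hzy.trans (mem_ball'.mp hy)), hz⟩
  simp [hdisj] at hz'

section Contracting

variable {X : Type*} [MetricSpace X] {ℓ : Set X}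

theorem dist_le_infDist_add_of_mem_projSet (hX : IsGeodesicSpace X) (hmax : MaxPrinciple X)
    {C : ℝ} (hproj : ProjCloseToSegments ℓ C) {x y y' : X} (hxy : dist x y ≤ infDist x ℓ)
    (hy' : y' ∈ projSet ℓ y) : dist x y' ≤ infDist x ℓ + C := by
  refine le_of_forall_pos_le_add fun ε hε => ?_
  obtain ⟨w, hwℓ, hxw⟩ := (infDist_lt_iff ⟨y', hy'.1⟩).mp (lt_add_of_pos_right (infDist x ℓ) hε)
  obtain ⟨s, hs⟩ := hX y w
  obtain ⟨u, hus, hy'u⟩ := (infDist_lt_iff ⟨y, hs.left_mem⟩).mp (hproj y w hwℓ y' hy' s hs)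
  have hxu : dist x u ≤ infDist x ℓ + ε :=
    (hmax y w x s hs u hus).trans (max_le (by linarith) hxw.le)
  calc dist x y' ≤ dist x u + dist y' u := dist_triangle_right x y' u
    _ ≤ infDist x ℓ + C + ε := by linarith

theorem dist_lt_of_dist_add_dist_eq {x p w m : X} {D c δ : ℝ}
    (hw : dist x w + dist w p = dist x p) (hmw : dist m w < δ) (hxm : D ≤ dist x m)
    (hxp : dist x p ≤ D + c) : dist p m < c + 2 * δ := by
  linarith [dist_triangle x w m, dist_triangle p w m, dist_comm w m, dist_comm p w]

theorem dist_lt_of_dist_le_infDist_add (hX : IsGeodesicSpace X) (hℓ : IsGeodesicSet ℓ)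
    {δ : ℝ} (hslim : SlimOn δ ℓ) {x p q : X} (hp : p ∈ ℓ) (hq : q ∈ ℓ) {c : ℝ}
    (hxp : dist x p ≤ infDist x ℓ + c) (hxq : dist x q ≤ infDist x ℓ + c) :
    dist p q < 2 * c + 4 * δ := by
  obtain ⟨S, hS, hSℓ⟩ := hℓ.exists_isGeodSeg_subset hp hq
  obtain ⟨m, hmS, hpm, hmq⟩ := hS.exists_midpoint
  obtain ⟨sxq, hsxq⟩ := hX x q
  obtain ⟨sxp, hsxp⟩ := hX x p
  obtain ⟨w, hw, hmw⟩ :=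
    mem_thickening_iff.mp ((hslim p q x S sxq sxp hS hsxq.symm hsxp hSℓ).1 hmS)
  have hxm : infDist x ℓ ≤ dist x m := infDist_le_dist_of_mem (hSℓ hmS)
  rcases hw with hw | hw
  · have := dist_lt_of_dist_add_dist_eq (hsxq.dist_add_dist_eq hw) hmw hxm hxq
    rw [dist_comm q m] at this
    linarith
  · have := dist_lt_of_dist_add_dist_eq (hsxp.dist_add_dist_eq hw) hmw hxm hxp
    linarith

end Contracting

/-- if `ℓ` is a geodesic in a geodesic metric space such that triangles with one
side on `ℓ` are `δ`-slim, the projection estimate `d(z,[x,y]) < 4δ` holds for `z ∈ π_ℓ(x)`,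
`y ∈ ℓ`, and the maximum principle holds (distance to a point attains its maximum on a geodesic
segment at an endpoint), then `ℓ` is `24δ`-contracting: for any ball `B(x,r)` disjoint from `ℓ`,
any `y ∈ B(x,r)` and projections `x' ∈ π_ℓ(x)`, `y' ∈ π_ℓ(y)` satisfy `d(x',y') < 12δ`, and
hence `diam (π_ℓ(B(x,r))) ≤ 24δ`. -/
theorem stmt7 {X : Type*} [MetricSpace X]
    (hgeo : ∀ a b : X, ∃ s : Set X, IsGeodSeg s a b)
    (ℓ : Set X) (hℓ : IsGeodesicSet ℓ) (δ : ℝ) (hδ : 0 < δ)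
    (hslim : SlimOn δ ℓ)
    (hproj : ∀ x : X, ∀ y ∈ ℓ, ∀ z ∈ projSet ℓ x, ∀ s : Set X,
      IsGeodSeg s x y → Metric.infDist z s < 4 * δ)
    (hmax : ∀ (a b c : X) (s : Set X), IsGeodSeg s a b →
      ∀ u ∈ s, dist c u ≤ max (dist c a) (dist c b)) :
    ∀ (x : X) (r : ℝ), Metric.ball x r ∩ ℓ = ∅ →
      (∀ y ∈ Metric.ball x r, ∀ x' ∈ projSet ℓ x, ∀ y' ∈ projSet ℓ y,
        dist x' y' < 12 * δ) ∧
      Metric.diam (⋃ y ∈ Metric.ball x r, projSet ℓ y) ≤ 24 * δ := by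
  intro x r hdisj
  have hnear : ∀ y ∈ ball x r, ∀ y' ∈ projSet ℓ y, dist x y' ≤ infDist x ℓ + 4 * δ :=
    fun y hy y' hy' => dist_le_infDist_add_of_mem_projSet hgeo hmax hproj
      (le_infDist_of_ball_inter_eq_empty hdisj ⟨y', hy'.1⟩ hy) hy'
  have hclose : ∀ y₁ ∈ ball x r, ∀ y₂ ∈ ball x r, ∀ p ∈ projSet ℓ y₁, ∀ q ∈ projSet ℓ y₂,
      dist p q < 12 * δ := fun y₁ hy₁ y₂ hy₂ p hp q hq => by
    linarith [dist_lt_of_dist_le_infDist_add hgeo hℓ hslim hp.1 hq.1 (hnear y₁ hy₁ p hp)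
      (hnear y₂ hy₂ q hq)]
  refine ⟨fun y hy => hclose x (mem_ball_self (pos_of_mem_ball hy)) y hy,
    diam_le_of_forall_dist_le (by positivity) ?_⟩
  simp only [mem_iUnion]
  rintro p ⟨y₁, hy₁, hp⟩ q ⟨y₂, hy₂, hq⟩
  exact (hclose y₁ hy₁ y₂ hy₂ p hp q hq).le.trans (by linarith)
end

section
/- Let Ω_n ⊂ P(ℝ^d) be a sequence of properly convex domains converging (in Hausdorff distance of closures) to a properly convex domain Ω_∞. Suppose x_n, y_n ∈ Ω_n converge to points x, y ∈ closure(Ω_∞), and liminf_n d_{Ω_n}(x_n, y_n) < ∞. Then x and y lie in the same face F of Ω_∞ (where F = Ω_∞ itself if x ∈ Ω_∞), and d_F(x,y) ≤ liminf_n d_{Ω_n}(x_n, y_n), where d_F is the Hilbert metric of the face F viewed as a properly convex domain in its projective span. -/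
open Classical in
/-- The Hilbert (cross-ratio) distance of a convex domain `Ω`, in an affine-chart model:
`d_Ω(x,y) = ½ log [a,b;x,y]` computed along the chord of `Ω` through `x` and `y`. -/
noncomputable def hilbertDist {E : Type*} [NormedAddCommGroup E] [NormedSpace ℝ E]
    (Ω : Set E) (x y : E) : ℝ :=
  if x = y then 0
  else
    (1 / 2) * Real.log
      (((1 - sInf {t : ℝ | x + t • (y - x) ∈ Ω}) * sSup {t : ℝ | x + t • (y - x) ∈ Ω}) /
        ((-sInf {t : ℝ | x + t • (y - x) ∈ Ω}) * (sSup {t : ℝ | x + t • (y - x) ∈ Ω} - 1)))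

/-- A properly convex domain, in an affine-chart model: a nonempty bounded open convex set. -/
def IsProperlyConvex {E : Type*} [NormedAddCommGroup E] [NormedSpace ℝ E] (Ω : Set E) : Prop :=
  IsOpen Ω ∧ Convex ℝ Ω ∧ Bornology.IsBounded Ω ∧ Ω.Nonempty

/-- The open face of the convex set `K` containing the point `x` (so the face of a point
of the interior is the whole relative interior, and `openFace (closure Ω) x = Ω` for
`x ∈ Ω` when `Ω` is open and convex). -/
def openFace {E : Type*} [NormedAddCommGroup E] [NormedSpace ℝ E] (K : Set E) (x : E) : Set E :=
  {y | y = x ∨ ∃ a ∈ K, ∃ b ∈ K, x ∈ openSegment ℝ a b ∧ y ∈ openSegment ℝ a b}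

/-! A bound `d_{Ω_k}(x_k, y_k) ≤ D` says that the chord of `Ω_k` through `x_k, y_k`, parametrized
as `x_k + t (y_k - x_k)`, has end parameters `a_k < 0 < 1 < b_k` of cross-ratio at most `e^{2D}`.
This keeps `a_k` away from `0` and `b_k` away from `1`, while the uniform boundedness of the
domains keeps both bounded, so along a subsequence they converge to some `α < 0 < 1 < β`.
Hausdorff convergence puts the limiting endpoints `x + α (y - x)` and `x + β (y - x)` in
`closure Ω∞`, so `x` and `y` lie on a common open segment of `closure Ω∞`, hence in the same
face `F`. The chord of `F` through `x, y` contains the parameters `(α, β)`, and monotonicity of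
the cross-ratio gives `d_F(x, y) ≤ D`. -/

open Filter Metric Set Topology

/-- The cross-ratio of the four points with chord parameters `a, 0, 1, b`, as in `hilbertDist`. -/
noncomputable def crossRatio (a b : ℝ) : ℝ := ((1 - a) * b) / ((-a) * (b - 1))

section CrossRatio

variable {a b : ℝ}

lemma crossRatio_eq_mul (ha : a < 0) (hb : 1 < b) :
    crossRatio a b = (1 + (-a)⁻¹) * (1 + (b - 1)⁻¹) := by
  have hv : b - 1 ≠ 0 := by linarith
  rw [crossRatio]
  field_simp [ha.ne]
  ring

lemma one_lt_crossRatio (ha : a < 0) (hb : 1 < b) : 1 < crossRatio a b := by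
  rw [crossRatio_eq_mul ha hb]
  have : 0 < (-a)⁻¹ := inv_pos.2 (by linarith)
  have : 0 < (b - 1)⁻¹ := inv_pos.2 (by linarith)
  nlinarith

lemma crossRatio_le_crossRatio {a' b' : ℝ} (ha' : a' ≤ a) (ha : a < 0) (hb : 1 < b)
    (hb' : b ≤ b') : crossRatio a' b' ≤ crossRatio a b := by
  rw [crossRatio_eq_mul (ha'.trans_lt ha) (hb.trans_le hb'), crossRatio_eq_mul ha hb]
  have hu : 0 < (-a)⁻¹ := inv_pos.2 (by linarith)
  have hv : 0 < (b' - 1)⁻¹ := inv_pos.2 (by linarith)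
  gcongr
  linarith

lemma le_of_crossRatio_le {M : ℝ} (ha : a < 0) (hb : 1 < b) (h : crossRatio a b ≤ M) :
    a ≤ -(M - 1)⁻¹ ∧ 1 + (M - 1)⁻¹ ≤ b := by
  rw [crossRatio_eq_mul ha hb] at h
  have hu : 0 < (-a)⁻¹ := inv_pos.2 (by linarith)
  have hv : 0 < (b - 1)⁻¹ := inv_pos.2 (by linarith)
  have hua : (-a)⁻¹ ≤ M - 1 := by nlinarith
  have hvb : (b - 1)⁻¹ ≤ M - 1 := by nlinarith
  have h1 := inv_le_of_inv_le₀ (by linarith) hua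
  have h2 := inv_le_of_inv_le₀ (by linarith) hvb
  constructor <;> linarith

lemma continuousAt_crossRatio (ha : a < 0) (hb : 1 < b) :
    ContinuousAt (fun p : ℝ × ℝ => crossRatio p.1 p.2) (a, b) := by
  unfold crossRatio
  exact ((continuous_const.sub continuous_fst).mul continuous_snd).continuousAt.div
    (continuous_fst.neg.mul (continuous_snd.sub continuous_const)).continuousAt
    (mul_pos (by linarith) (by linarith : (0 : ℝ) < b - 1)).ne'

end CrossRatio

section Chord

variable {E : Type*} [NormedAddCommGroup E] [NormedSpace ℝ E] {Ω : Set E} {x y : E}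

def chordSet (Ω : Set E) (x y : E) : Set ℝ := {t | x + t • (y - x) ∈ Ω}

lemma hilbertDist_of_ne (hxy : x ≠ y) :
    hilbertDist Ω x y =
      1 / 2 * Real.log (crossRatio (sInf (chordSet Ω x y)) (sSup (chordSet Ω x y))) := by
  rw [hilbertDist, if_neg hxy]
  rfl

lemma exp_two_mul_hilbertDist (hxy : x ≠ y) (h0 : sInf (chordSet Ω x y) < 0)
    (h1 : 1 < sSup (chordSet Ω x y)) :
    Real.exp (2 * hilbertDist Ω x y) =
      crossRatio (sInf (chordSet Ω x y)) (sSup (chordSet Ω x y)) := by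
  rw [hilbertDist_of_ne hxy, ← mul_assoc, mul_one_div_cancel two_ne_zero, one_mul,
    Real.exp_log (zero_lt_one.trans (one_lt_crossRatio h0 h1))]

lemma chordSet_subset_Icc {R : ℝ} (hR : ∀ z ∈ Ω, ‖z‖ ≤ R) (hx : x ∈ Ω) (hxy : x ≠ y) :
    chordSet Ω x y ⊆ Icc (-(2 * R / ‖y - x‖)) (2 * R / ‖y - x‖) := by
  intro t ht
  have hyx : 0 < ‖y - x‖ := norm_pos_iff.2 (sub_ne_zero.2 hxy.symm)
  have hnorm : |t| * ‖y - x‖ ≤ 2 * R := by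
    calc |t| * ‖y - x‖ = ‖(x + t • (y - x)) - x‖ := by rw [add_sub_cancel_left, norm_smul,
          Real.norm_eq_abs]
      _ ≤ ‖x + t • (y - x)‖ + ‖x‖ := norm_sub_le _ _
      _ ≤ 2 * R := by linarith [hR _ ht, hR _ hx]
  exact abs_le.1 ((le_div_iff₀ hyx).2 hnorm)

lemma isBounded_chordSet (hΩ : Bornology.IsBounded Ω) (hx : x ∈ Ω) (hxy : x ≠ y) :
    Bornology.IsBounded (chordSet Ω x y) := by
  obtain ⟨R, hR⟩ := isBounded_iff_forall_norm_le.1 hΩ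
  exact (isBounded_Icc _ _).subset (chordSet_subset_Icc hR hx hxy)

lemma isOpen_chordSet (hΩ : IsOpen Ω) : IsOpen (chordSet Ω x y) :=
  hΩ.preimage (by fun_prop)

lemma sInf_chordSet_neg (hΩ : IsOpen Ω) (hbdd : BddBelow (chordSet Ω x y)) (hx : x ∈ Ω) :
    sInf (chordSet Ω x y) < 0 := by
  have h0 : (0 : ℝ) ∈ chordSet Ω x y := by simpa [chordSet] using hx
  obtain ⟨t, ht, htmem⟩ := Eventually.exists_lt ((isOpen_chordSet hΩ).mem_nhds h0)
  exact (csInf_le hbdd htmem).trans_lt ht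

lemma one_lt_sSup_chordSet (hΩ : IsOpen Ω) (hbdd : BddAbove (chordSet Ω x y)) (hy : y ∈ Ω) :
    1 < sSup (chordSet Ω x y) := by
  have h1 : (1 : ℝ) ∈ chordSet Ω x y := by simpa [chordSet] using hy
  obtain ⟨t, ht, htmem⟩ := Eventually.exists_gt ((isOpen_chordSet hΩ).mem_nhds h1)
  exact ht.trans_le (le_csSup hbdd htmem)

lemma hilbertDist_pos (hΩ : IsOpen Ω) (hΩb : Bornology.IsBounded Ω) (hx : x ∈ Ω) (hy : y ∈ Ω)
    (hxy : x ≠ y) : 0 < hilbertDist Ω x y := by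
  have hbdd := isBounded_chordSet hΩb hx hxy
  have h0 := sInf_chordSet_neg hΩ hbdd.bddBelow hx
  have h1 := one_lt_sSup_chordSet hΩ hbdd.bddAbove hy
  have := exp_two_mul_hilbertDist hxy h0 h1 ▸ one_lt_crossRatio h0 h1
  linarith [Real.one_lt_exp_iff.1 this]

lemma hilbertDist_nonneg (hΩ : IsOpen Ω) (hΩb : Bornology.IsBounded Ω) (hx : x ∈ Ω) (hy : y ∈ Ω) :
    0 ≤ hilbertDist Ω x y := by
  rcases eq_or_ne x y with rfl | hxy
  · simp [hilbertDist]
  · exact (hilbertDist_pos hΩ hΩb hx hy hxy).le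

lemma exp_two_mul_hilbertDist_le {α β : ℝ} (hΩ : Bornology.IsBounded Ω) (hx : x ∈ Ω)
    (hxy : x ≠ y) (hsub : Ioo α β ⊆ chordSet Ω x y) (hα : α < 0) (hβ : 1 < β) :
    Real.exp (2 * hilbertDist Ω x y) ≤ crossRatio α β := by
  have hbdd := isBounded_chordSet hΩ hx hxy
  have hαβ : α < β := hα.trans (zero_lt_one.trans hβ)
  have hinf : sInf (chordSet Ω x y) ≤ α := by
    simpa [csInf_Ioo hαβ] using csInf_le_csInf hbdd.bddBelow (nonempty_Ioo.2 hαβ) hsub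
  have hsup : β ≤ sSup (chordSet Ω x y) := by
    simpa [csSup_Ioo hαβ] using csSup_le_csSup hbdd.bddAbove (nonempty_Ioo.2 hαβ) hsub
  rw [exp_two_mul_hilbertDist hxy (hinf.trans_lt hα) (hβ.trans_le hsup)]
  exact crossRatio_le_crossRatio hinf hα hβ hsup

lemma add_smul_mem_closure {t : ℝ} (ht : t ∈ closure (chordSet Ω x y)) :
    x + t • (y - x) ∈ closure Ω :=
  map_mem_closure (f := fun s : ℝ => x + s • (y - x)) (by fun_prop) ht fun _ hs => hs

lemma add_smul_mem_openSegment {α β t : ℝ} (ht : t ∈ Ioo α β) :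
    x + t • (y - x) ∈ openSegment ℝ (x + α • (y - x)) (x + β • (y - x)) := by
  have h := image_openSegment ℝ (AffineMap.lineMap x y) α β
  rw [openSegment_eq_Ioo (ht.1.trans ht.2)] at h
  have hmem := h ▸ mem_image_of_mem (AffineMap.lineMap x y) ht
  simpa only [AffineMap.lineMap_apply_module', add_comm] using hmem

lemma add_sInf_smul_mem_closure (hΩ : Bornology.IsBounded Ω) (hx : x ∈ Ω) (hxy : x ≠ y) :
    x + sInf (chordSet Ω x y) • (y - x) ∈ closure Ω :=
  add_smul_mem_closure (csInf_mem_closure ⟨0, by simpa [chordSet] using hx⟩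
    (isBounded_chordSet hΩ hx hxy).bddBelow)

lemma add_sSup_smul_mem_closure (hΩ : Bornology.IsBounded Ω) (hx : x ∈ Ω) (hxy : x ≠ y) :
    x + sSup (chordSet Ω x y) • (y - x) ∈ closure Ω :=
  add_smul_mem_closure (csSup_mem_closure ⟨0, by simpa [chordSet] using hx⟩
    (isBounded_chordSet hΩ hx hxy).bddAbove)

lemma chordSet_bounds_of_hilbertDist_le {R δ D : ℝ} (hΩ : IsOpen Ω) (hR : ∀ z ∈ Ω, ‖z‖ ≤ R)
    (hx : x ∈ Ω) (hy : y ∈ Ω) (hδ : 0 < δ) (hxy : δ ≤ ‖y - x‖) (hD : hilbertDist Ω x y ≤ D) :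
    crossRatio (sInf (chordSet Ω x y)) (sSup (chordSet Ω x y)) ≤ Real.exp (2 * D) ∧
      sInf (chordSet Ω x y) ∈ Icc (-(2 * R / δ)) (-(Real.exp (2 * D) - 1)⁻¹) ∧
      sSup (chordSet Ω x y) ∈ Icc (1 + (Real.exp (2 * D) - 1)⁻¹) (2 * R / δ) := by
  have hne : x ≠ y := by
    rintro rfl
    rw [sub_self, norm_zero] at hxy
    linarith
  have hsub := chordSet_subset_Icc hR hx hne
  have hnonempty : (chordSet Ω x y).Nonempty := ⟨0, by simpa [chordSet] using hx⟩
  have h0 := sInf_chordSet_neg hΩ (bddBelow_Icc.mono hsub) hx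
  have h1 := one_lt_sSup_chordSet hΩ (bddAbove_Icc.mono hsub) hy
  have hcr : crossRatio (sInf (chordSet Ω x y)) (sSup (chordSet Ω x y)) ≤ Real.exp (2 * D) :=
    exp_two_mul_hilbertDist hne h0 h1 ▸ Real.exp_le_exp.2 (by linarith)
  obtain ⟨hinf, hsup⟩ := le_of_crossRatio_le h0 h1 hcr
  have hR0 : 0 ≤ 2 * R := by linarith [hR x hx, norm_nonneg x]
  have hbound : 2 * R / ‖y - x‖ ≤ 2 * R / δ := div_le_div_of_nonneg_left hR0 hδ hxy
  refine ⟨hcr, ⟨?_, hinf⟩, ⟨hsup, ?_⟩⟩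
  · exact (neg_le_neg hbound).trans (le_csInf hnonempty fun t ht => (hsub ht).1)
  · exact (csSup_le hnonempty fun t ht => (hsub ht).2).trans hbound

end Chord

section Face

variable {E : Type*} [NormedAddCommGroup E] [NormedSpace ℝ E] {K : Set E} {x y : E} {α β : ℝ}

lemma openFace_subset (hK : Convex ℝ K) (hx : x ∈ K) : openFace K x ⊆ K := by
  rintro z (rfl | ⟨a, ha, b, hb, -, hz⟩)
  · exact hx
  · exact hK.openSegment_subset ha hb hz

lemma Ioo_subset_chordSet_openFace (ha : x + α • (y - x) ∈ K) (hb : x + β • (y - x) ∈ K)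
    (hα : α < 0) (hβ : 0 < β) : Ioo α β ⊆ chordSet (openFace K x) x y := fun _ ht =>
  Or.inr ⟨_, ha, _, hb, by simpa using add_smul_mem_openSegment (x := x) (y := y) ⟨hα, hβ⟩,
    add_smul_mem_openSegment ht⟩

lemma mem_openFace_and_exp_two_mul_hilbertDist_le (hK : Convex ℝ K)
    (hKb : Bornology.IsBounded K) (hx : x ∈ K) (hxy : x ≠ y) (ha : x + α • (y - x) ∈ K)
    (hb : x + β • (y - x) ∈ K) (hα : α < 0) (hβ : 1 < β) :
    y ∈ openFace K x ∧ Real.exp (2 * hilbertDist (openFace K x) x y) ≤ crossRatio α β := by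
  have hsub := Ioo_subset_chordSet_openFace ha hb hα (zero_lt_one.trans hβ)
  refine ⟨by simpa [chordSet] using hsub ⟨hα.trans zero_lt_one, hβ⟩, ?_⟩
  exact exp_two_mul_hilbertDist_le (hKb.subset (openFace_subset hK hx)) (Or.inl rfl) hxy hsub hα hβ

end Face

section Hausdorff

lemma mem_of_tendsto_of_tendsto_hausdorffDist {X : Type*} [PseudoMetricSpace X]
    {S : ℕ → Set X} {K : Set X} (hK : IsClosed K) (hfin : ∀ k, hausdorffEDist (S k) K ≠ ⊤)
    (hS : Tendsto (fun k => hausdorffDist (S k) K) atTop (𝓝 0)) {σ : ℕ → ℕ}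
    (hσ : Tendsto σ atTop atTop) {z : ℕ → X} {w : X} (hz : ∀ j, z j ∈ S (σ j))
    (hw : Tendsto z atTop (𝓝 w)) : w ∈ K := by
  have hKne : K.Nonempty := by
    by_contra h
    exact hfin (σ 0) (not_nonempty_iff_eq_empty.1 h ▸ hausdorffEDist_empty ⟨_, hz 0⟩)
  have h0 : Tendsto (fun j => infDist (z j) K) atTop (𝓝 0) :=
    squeeze_zero (fun _ => infDist_nonneg)
      (fun j => infDist_le_hausdorffDist_of_mem (hz j) (hfin _)) (hS.comp hσ)
  exact (hK.mem_iff_infDist_zero hKne).2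
    (tendsto_nhds_unique (((continuous_infDist_pt K).tendsto w).comp hw) h0)

lemma eventually_forall_norm_le_of_tendsto_hausdorffDist {E : Type*} [SeminormedAddCommGroup E]
    {S : ℕ → Set E} {K : Set E} {R : ℝ} (hR : ∀ w ∈ K, ‖w‖ ≤ R)
    (hfin : ∀ k, hausdorffEDist (S k) K ≠ ⊤)
    (hS : Tendsto (fun k => hausdorffDist (S k) K) atTop (𝓝 0)) :
    ∀ᶠ k in atTop, ∀ z ∈ S k, ‖z‖ ≤ R + 1 := by
  filter_upwards [hS.eventually (eventually_lt_nhds one_pos)] with k hk z hz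
  obtain ⟨w, hw, hzw⟩ := exists_dist_lt_of_hausdorffDist_lt hz hk (hfin k)
  rw [dist_eq_norm] at hzw
  linarith [norm_le_norm_add_norm_sub' z w, hR w hw]

end Hausdorff

theorem exists_limit_chord_of_frequently_hilbertDist_le {E : Type*} [NormedAddCommGroup E]
    [NormedSpace ℝ E] {Ω : ℕ → Set E} {K : Set E} (hΩ : ∀ k, IsOpen (Ω k))
    (hΩb : ∀ k, Bornology.IsBounded (Ω k)) (hK : IsClosed K) (hKne : K.Nonempty)
    (hKb : Bornology.IsBounded K)
    (hconv : Tendsto (fun k => hausdorffDist (closure (Ω k)) K) atTop (𝓝 0))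
    {xs ys : ℕ → E} {x y : E} (hxs : ∀ k, xs k ∈ Ω k) (hys : ∀ k, ys k ∈ Ω k)
    (hx : Tendsto xs atTop (𝓝 x)) (hy : Tendsto ys atTop (𝓝 y)) (hxy : x ≠ y) {D : ℝ}
    (hD : ∃ᶠ k in atTop, hilbertDist (Ω k) (xs k) (ys k) ≤ D) :
    ∃ α β, α < 0 ∧ 1 < β ∧ x + α • (y - x) ∈ K ∧ x + β • (y - x) ∈ K ∧
      crossRatio α β ≤ Real.exp (2 * D) := by
  have hfin : ∀ k, hausdorffEDist (closure (Ω k)) K ≠ ⊤ := fun k =>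
    hausdorffEDist_ne_top_of_nonempty_of_bounded ⟨xs k, subset_closure (hxs k)⟩ hKne
      (hΩb k).closure hKb
  obtain ⟨R, hR⟩ := isBounded_iff_forall_norm_le.1 hKb
  have hbound : ∀ᶠ k in atTop, ∀ z ∈ Ω k, ‖z‖ ≤ R + 1 :=
    (eventually_forall_norm_le_of_tendsto_hausdorffDist hR hfin hconv).mono
      fun _ hk z hz => hk z (subset_closure hz)
  have hyx : 0 < ‖y - x‖ := norm_pos_iff.2 (sub_ne_zero.2 hxy.symm)
  have hsep : ∀ᶠ k in atTop, ‖y - x‖ / 2 ≤ ‖ys k - xs k‖ :=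
    (hy.sub hx).norm.eventually (eventually_ge_nhds (half_lt_self hyx))
  obtain ⟨φ, hφ, hφD⟩ := extraction_of_frequently_atTop (hD.and_eventually (hbound.and hsep))
  have hne j : xs (φ j) ≠ ys (φ j) := fun h => by
    have := (hφD j).2.2
    rw [h, sub_self, norm_zero] at this
    linarith
  have hM : 1 < Real.exp (2 * D) := Real.one_lt_exp_iff.2 (by
    linarith [hilbertDist_pos (hΩ _) (hΩb _) (hxs _) (hys _) (hne 0), (hφD 0).1])
  have hchord j := chordSet_bounds_of_hilbertDist_le (hΩ (φ j)) (hφD j).2.1 (hxs _) (hys _)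
    (half_pos hyx) (hφD j).2.2 (hφD j).1
  obtain ⟨⟨α, β⟩, ⟨⟨-, hα⟩, ⟨hβ, -⟩⟩, ψ, hψ, hlim⟩ :=
    (isCompact_Icc.prod isCompact_Icc).tendsto_subseq fun j =>
      mk_mem_prod (hchord j).2.1 (hchord j).2.2
  have hα0 : α < 0 := hα.trans_lt (neg_neg_of_pos (inv_pos.2 (sub_pos.2 hM)))
  have hβ1 : 1 < β := (lt_add_of_pos_right 1 (inv_pos.2 (sub_pos.2 hM))).trans_le hβ
  have hσ : Tendsto (φ ∘ ψ) atTop atTop := (hφ.comp hψ).tendsto_atTop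
  have hend {c : ℕ → ℝ} {γ : ℝ} (hc : Tendsto c atTop (𝓝 γ))
      (hmem : ∀ j, xs (φ (ψ j)) + c j • (ys (φ (ψ j)) - xs (φ (ψ j))) ∈ closure (Ω (φ (ψ j)))) :
      x + γ • (y - x) ∈ K :=
    mem_of_tendsto_of_tendsto_hausdorffDist hK hfin hconv hσ hmem
      ((hx.comp hσ).add (hc.smul ((hy.comp hσ).sub (hx.comp hσ))))
  refine ⟨α, β, hα0, hβ1, hend ((continuous_fst.tendsto _).comp hlim) fun j => ?_,
    hend ((continuous_snd.tendsto _).comp hlim) fun j => ?_,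
    le_of_tendsto' ((continuousAt_crossRatio hα0 hβ1).tendsto.comp hlim) fun j => (hchord (ψ j)).1⟩
  · exact add_sInf_smul_mem_closure (hΩb _) (hxs _) (hne _)
  · exact add_sSup_smul_mem_closure (hΩb _) (hxs _) (hne _)

theorem stmt10_general {n : ℕ} (Ω : ℕ → Set (EuclideanSpace ℝ (Fin n)))
    (Ωinf : Set (EuclideanSpace ℝ (Fin n)))
    (hΩ : ∀ k, IsProperlyConvex (Ω k)) (hinf : IsProperlyConvex Ωinf)
    (hconv : Tendsto (fun k => Metric.hausdorffDist (closure (Ω k)) (closure Ωinf))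
      atTop (nhds 0))
    (xs ys : ℕ → EuclideanSpace ℝ (Fin n)) (x y : EuclideanSpace ℝ (Fin n))
    (hxs : ∀ k, xs k ∈ Ω k) (hys : ∀ k, ys k ∈ Ω k)
    (hx : Tendsto xs atTop (nhds x)) (hy : Tendsto ys atTop (nhds y))
    (hxcl : x ∈ closure Ωinf)
    (C : ℝ) (hbd : ∃ᶠ k in atTop, hilbertDist (Ω k) (xs k) (ys k) ≤ C) :
    y ∈ openFace (closure Ωinf) x ∧
      hilbertDist (openFace (closure Ωinf) x) x y ≤
        liminf (fun k => hilbertDist (Ω k) (xs k) (ys k)) atTop := by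
  set d := fun k => hilbertDist (Ω k) (xs k) (ys k)
  have hcobdd : IsCoboundedUnder (· ≥ ·) atTop d := .of_frequently_le hbd
  have hL : 0 ≤ liminf d atTop := le_liminf_of_le hcobdd <| .of_forall fun k =>
    hilbertDist_nonneg (hΩ k).1 (hΩ k).2.2.1 (hxs k) (hys k)
  rcases eq_or_ne x y with rfl | hxy
  · exact ⟨Or.inl rfl, by simpa [hilbertDist] using hL⟩
  have hface D (hD : liminf d atTop < D) :
      y ∈ openFace (closure Ωinf) x ∧ hilbertDist (openFace (closure Ωinf) x) x y ≤ D := by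
    obtain ⟨α, β, hα, hβ, ha, hb, hcr⟩ := exists_limit_chord_of_frequently_hilbertDist_le
      (fun k => (hΩ k).1) (fun k => (hΩ k).2.2.1) isClosed_closure hinf.2.2.2.closure
      hinf.2.2.1.closure hconv hxs hys hx hy hxy
      ((frequently_lt_of_liminf_lt hcobdd hD).mono fun _ => le_of_lt)
    obtain ⟨hyF, hdist⟩ := mem_openFace_and_exp_two_mul_hilbertDist_le hinf.2.1.closure
      hinf.2.2.1.closure hxcl hxy ha hb hα hβ
    exact ⟨hyF, by simpa using Real.exp_le_exp.1 (hdist.trans hcr)⟩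
  exact ⟨(hface _ (lt_add_one _)).1, le_of_forall_gt_imp_ge_of_dense fun D hD => (hface D hD).2⟩

/-- if properly convex domains `Ω n` converge (Hausdorff distance of closures)
to `Ω∞`, points `x n, y n ∈ Ω n` converge to `x, y ∈ closure Ω∞`, and
`liminf d_{Ω n}(x n, y n) < ∞` (i.e. the distances are frequently bounded), then `x` and `y`
lie in the same face `F` of `Ω∞` and `d_F(x,y) ≤ liminf d_{Ω n}(x n, y n)`. -/
theorem stmt10 {n : ℕ} (Ω : ℕ → Set (EuclideanSpace ℝ (Fin n)))
    (Ωinf : Set (EuclideanSpace ℝ (Fin n)))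
    (hΩ : ∀ k, IsProperlyConvex (Ω k)) (hinf : IsProperlyConvex Ωinf)
    (hconv : Tendsto (fun k => Metric.hausdorffDist (closure (Ω k)) (closure Ωinf))
      atTop (nhds 0))
    (xs ys : ℕ → EuclideanSpace ℝ (Fin n)) (x y : EuclideanSpace ℝ (Fin n))
    (hxs : ∀ k, xs k ∈ Ω k) (hys : ∀ k, ys k ∈ Ω k)
    (hx : Tendsto xs atTop (nhds x)) (hy : Tendsto ys atTop (nhds y))
    (hxcl : x ∈ closure Ωinf) (hycl : y ∈ closure Ωinf)
    (C : ℝ) (hbd : ∃ᶠ k in atTop, hilbertDist (Ω k) (xs k) (ys k) ≤ C) :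
    y ∈ openFace (closure Ωinf) x ∧
      hilbertDist (openFace (closure Ωinf) x) x y ≤
        liminf (fun k => hilbertDist (Ω k) (xs k) (ys k)) atTop :=
  stmt10_general Ω Ωinf hΩ hinf hconv xs ys x y hxs hys hx hy hxcl C hbd
end
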